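/- arXiv:2506.02635 — 7 statements merged into one kernel-verified Lean document; each statement's English description precedes it below -/
import Mathlib

section
/- Let E be a finite-dimensional real inner product space, X ⊆ E a nonempty compact convex set of diameter at most D > 0, and f : E → ℝ a convex differentiable function that is L-smooth on X (L > 0). Let f* = min_{y∈X} f(y), let x ∈ X with primal gap h = f(x) − f*, let v ∈ X minimize y ↦ ⟨∇f(x), y⟩ over X, and let x' = x + γ*(v − x) where γ* minimizes γ ↦ f(x + γ(v − x)) over [0,1]. Then: if h ≤ L D², one has f(x') − f* ≤ h − h²/(2 L D²), and if h > L D², one has f(x') − f* ≤ h/2. -/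
/-!
Smoothness bounds `f (x + t (v - x)) - f x` by `t ⟪∇f x, v - x⟫ + L t² D² / 2`, and by convexity
and the choice of `v` the linear term is at most `-t h`: the Frank-Wolfe gap `⟪∇f x, x - v⟫`
dominates the primal gap `h`. The line search does at least as well as every `t ∈ [0,1]`; take
the minimiser `t = h / (L D²)` of this quadratic when it lies in `[0,1]`, and `t = 1` otherwise.
-/

open RealInnerProductSpace Set

theorem ConvexOn.apply_sub_le_of_hasFDerivAt {E : Type*} [NormedAddCommGroup E]
    [NormedSpace ℝ E] {f : E → ℝ} {f' : E →L[ℝ] ℝ} {x : E} (hf : ConvexOn ℝ univ f)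
    (hd : HasFDerivAt f f' x) (y : E) : f' (y - x) ≤ f y - f x := by
  have hline : ConvexOn ℝ univ (f ∘ AffineMap.lineMap (k := ℝ) x y) := by
    simpa using hf.comp_affineMap (AffineMap.lineMap x y)
  have hderiv : HasDerivAt (f ∘ AffineMap.lineMap (k := ℝ) x y) (f' (y - x)) 0 := by
    have hd' : HasFDerivAt f f' (AffineMap.lineMap x y (0 : ℝ)) := by simpa using hd
    simpa using hd'.comp_hasDerivAt (0 : ℝ) (AffineMap.hasDerivAt_lineMap (a := x) (b := y))
  simpa [slope_def_field] using
    hline.le_slope_of_hasDerivAt (mem_univ 0) (mem_univ 1) one_pos hderiv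

theorem ConvexOn.sub_le_inner_sub_of_forall_inner_le {E : Type*} [NormedAddCommGroup E]
    [InnerProductSpace ℝ E] {X : Set E} {f : E → ℝ} {x xm v g : E} (hconv : ConvexOn ℝ univ f)
    (hdiff : HasFDerivAt f (innerSL ℝ g) x) (hxm : xm ∈ X) (hvmin : ∀ y ∈ X, ⟪g, v⟫ ≤ ⟪g, y⟫) :
    f x - f xm ≤ ⟪g, x - v⟫ := by
  have hgrad := hconv.apply_sub_le_of_hasFDerivAt hdiff xm
  have hv := hvmin xm hxm
  simp only [innerSL_apply_apply, inner_sub_right] at hgrad ⊢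
  linarith

theorem sub_le_of_smooth_of_le_inner {E : Type*} [NormedAddCommGroup E]
    [InnerProductSpace ℝ E] {X : Set E} (hXconv : Convex ℝ X) {f : E → ℝ} {x v g : E}
    {D L h t : ℝ} (hL : 0 ≤ L) (hx : x ∈ X) (hv : v ∈ X) (hvx : ‖v - x‖ ≤ D)
    (hsmooth : ∀ q ∈ X, f q - f x ≤ ⟪g, q - x⟫ + L / 2 * ‖q - x‖ ^ 2)
    (hgap : h ≤ ⟪g, x - v⟫) (ht : t ∈ Icc 0 1) :
    f (x + t • (v - x)) - f x ≤ -(t * h) + L * D ^ 2 / 2 * t ^ 2 := by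
  obtain ⟨ht0, ht1⟩ := ht
  have hmem : x + t • (v - x) ∈ X := by
    simpa [AffineMap.lineMap_apply, add_comm] using
      hXconv.lineMap_mem hx hv ⟨ht0, ht1⟩
  have hsm := hsmooth _ hmem
  rw [add_sub_cancel_left, real_inner_smul_right, norm_smul, Real.norm_of_nonneg ht0] at hsm
  have hlin : t * ⟪g, v - x⟫ ≤ -(t * h) := by
    rw [← neg_sub x v, inner_neg_right, mul_neg, neg_le_neg_iff]
    exact mul_le_mul_of_nonneg_left hgap ht0
  have hquad : (t * ‖v - x‖) ^ 2 ≤ (t * D) ^ 2 :=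
    pow_le_pow_left₀ (by positivity) (mul_le_mul_of_nonneg_left hvx ht0) 2
  nlinarith

theorem progress_of_forall_le_quadratic {a h C : ℝ} (hC : 0 < C) (hh : 0 ≤ h)
    (hbound : ∀ t ∈ Icc (0 : ℝ) 1, a ≤ h - t * h + C / 2 * t ^ 2) :
    (h ≤ C → a ≤ h - h ^ 2 / (2 * C)) ∧ (h > C → a ≤ h / 2) := by
  constructor
  · intro hle
    have ht : h / C ∈ Icc (0 : ℝ) 1 := ⟨by positivity, (div_le_one hC).2 hle⟩
    calc a ≤ h - h / C * h + C / 2 * (h / C) ^ 2 := hbound _ ht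
      _ = h - h ^ 2 / (2 * C) := by field_simp; ring
  · intro hgt
    linarith [hbound 1 ⟨zero_le_one, le_rfl⟩]

theorem fw_step_progress_general
    {E : Type*} [NormedAddCommGroup E] [InnerProductSpace ℝ E]
    (X : Set E) (hXconv : Convex ℝ X)
    (D : ℝ) (hD : 0 < D) (hdiam : ∀ p ∈ X, ∀ q ∈ X, ‖p - q‖ ≤ D)
    (f : E → ℝ) (g : E → E) (L : ℝ) (hL : 0 < L)
    (hconv : ConvexOn ℝ Set.univ f)
    (hdiff : ∀ p : E, HasFDerivAt f ((innerSL ℝ) (g p)) p)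
    (hsmooth : ∀ p ∈ X, ∀ q ∈ X, f q - f p ≤ ⟪g p, q - p⟫ + L / 2 * ‖q - p‖ ^ 2)
    (xm : E) (hxm : xm ∈ X) (hxmin : ∀ y ∈ X, f xm ≤ f y)
    (x : E) (hx : x ∈ X)
    (v : E) (hv : v ∈ X) (hvmin : ∀ y ∈ X, ⟪g x, v⟫ ≤ ⟪g x, y⟫)
    (γ : ℝ)
    (hγmin : ∀ γ' ∈ Set.Icc (0:ℝ) 1, f (x + γ • (v - x)) ≤ f (x + γ' • (v - x))) :
    (f x - f xm ≤ L * D ^ 2 →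
      f (x + γ • (v - x)) - f xm ≤ (f x - f xm) - (f x - f xm) ^ 2 / (2 * L * D ^ 2)) ∧
    (f x - f xm > L * D ^ 2 →
      f (x + γ • (v - x)) - f xm ≤ (f x - f xm) / 2) := by
  have hgap := hconv.sub_le_inner_sub_of_forall_inner_le (hdiff x) hxm hvmin
  have hbound : ∀ t ∈ Icc (0 : ℝ) 1,
      f (x + γ • (v - x)) - f xm ≤ (f x - f xm) - t * (f x - f xm) + L * D ^ 2 / 2 * t ^ 2 :=
    fun t ht => by
      linarith [hγmin t ht, sub_le_of_smooth_of_le_inner hXconv hL.le hx hv (hdiam v hv x hx)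
        (hsmooth x hx) hgap ht]
  simpa only [mul_assoc] using
    progress_of_forall_le_quadratic (by positivity) (sub_nonneg.2 (hxmin x hx)) hbound

/-- Progress of one exact-line-search Frank-Wolfe step: with primal gap `h = f x - f*`,
the new point `x' = x + γ*(v - x)` (with `γ*` an exact line-search minimizer over `[0,1]`
and `v` a Frank-Wolfe vertex) satisfies `f x' - f* ≤ h - h²/(2LD²)` if `h ≤ LD²`,
and `f x' - f* ≤ h/2` if `h > LD²`. -/
theorem fw_step_progress
    {E : Type*} [NormedAddCommGroup E] [InnerProductSpace ℝ E] [FiniteDimensional ℝ E]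
    (X : Set E) (hXne : X.Nonempty) (hXcomp : IsCompact X) (hXconv : Convex ℝ X)
    (D : ℝ) (hD : 0 < D) (hdiam : ∀ p ∈ X, ∀ q ∈ X, ‖p - q‖ ≤ D)
    (f : E → ℝ) (g : E → E) (L : ℝ) (hL : 0 < L)
    (hconv : ConvexOn ℝ Set.univ f)
    (hdiff : ∀ p : E, HasFDerivAt f ((innerSL ℝ) (g p)) p)
    (hsmooth : ∀ p ∈ X, ∀ q ∈ X, f q - f p ≤ ⟪g p, q - p⟫ + L / 2 * ‖q - p‖ ^ 2)
    (xm : E) (hxm : xm ∈ X) (hxmin : ∀ y ∈ X, f xm ≤ f y)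
    (x : E) (hx : x ∈ X)
    (v : E) (hv : v ∈ X) (hvmin : ∀ y ∈ X, ⟪g x, v⟫ ≤ ⟪g x, y⟫)
    (γ : ℝ) (hγ : γ ∈ Set.Icc (0:ℝ) 1)
    (hγmin : ∀ γ' ∈ Set.Icc (0:ℝ) 1, f (x + γ • (v - x)) ≤ f (x + γ' • (v - x))) :
    (f x - f xm ≤ L * D ^ 2 →
      f (x + γ • (v - x)) - f xm ≤ (f x - f xm) - (f x - f xm) ^ 2 / (2 * L * D ^ 2)) ∧
    (f x - f xm > L * D ^ 2 →
      f (x + γ • (v - x)) - f xm ≤ (f x - f xm) / 2) :=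
  fw_step_progress_general X hXconv D hD hdiam f g L hL hconv hdiff hsmooth xm hxm hxmin x hx v hv
    hvmin γ hγmin
end

section
/- Let E be a finite-dimensional real inner product space, X ⊆ E a compact convex set of diameter at most D > 0, and f : E → ℝ a convex differentiable function that is L-smooth on X (L > 0). Let T ≥ 1 and let (x_t)_{t=0}^T be points of X and (S_t)_{t=0}^T finite subsets of X with S_0 = {x_0} and x_t ∈ conv(S_t) for all t. For each t < T choose a_t ∈ argmax_{v∈S_t} ⟨∇f(x_t), v⟩, s_t ∈ argmin_{v∈S_t} ⟨∇f(x_t), v⟩, and v_t ∈ argmin_{v∈X} ⟨∇f(x_t), v⟩, and assume the iterates satisfy: (i) if ⟨∇f(x_t), a_t − s_t⟩ ≥ ⟨∇f(x_t), x_t − v_t⟩, then either [drop step] f(x_{t+1}) ≤ f(x_t), S_{t+1} ⊆ S_t, and |S_{t+1}| < |S_t|, or [descent step] f(x_t) − f(x_{t+1}) ≥ ⟨∇f(x_t), a_t − s_t⟩² / (2 L D²) and S_{t+1} ⊆ S_t; (ii) otherwise x_{t+1} = x_t + γ_t (v_t − x_t) where γ_t minimizes γ ↦ f(x_t + γ(v_t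 − x_t)) over [0,1], and S_{t+1} = S_t ∪ {v_t}. Then f(x_T) − min_{y∈X} f(y) ≤ 4 L D² / T. -/
/-!
Write `hₜ = f(xₜ) - f*` and `C = L D²`. By convexity `hₜ` is bounded by the Frank-Wolfe gap
`⟪∇f(xₜ), xₜ - vₜ⟫`, hence by the local pairwise gap whenever a corrective step is taken. Every
step that is not a drop step then satisfies the classical Frank-Wolfe recursion
`hₜ₊₁ ≤ (1 - γ) hₜ + γ² C / 2` for all `γ ∈ [0, 1]`: a Frank-Wolfe step by smoothness and line
search, a descent step because `h - h² / 2C` is the minimum over `γ` of the right-hand side. With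
`γ = 2 / (k + 2)` this gives `k hₜ ≤ 2C` after `k` such steps. Drop steps do not increase `hₜ` and
shrink the active set, which every other step enlarges by at most one element, so at least half
of the `T` steps are not drop steps.
-/

open RealInnerProductSpace

open Finset

/-- The one-step bound of a Frank-Wolfe step of length `γ` on a problem with curvature constant
`C`, moving the primal gap from `h` to `h'`. -/
def FWProgress (C h h' : ℝ) : Prop :=
  ∀ γ ∈ Set.Icc (0 : ℝ) 1, h' ≤ (1 - γ) * h + γ ^ 2 * C / 2

/-- `h` is the primal gap and `n` the size of the active set. -/
def DropOrProgress (C h h' : ℝ) (n n' : ℕ) : Prop :=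
  (h' ≤ h ∧ n' < n) ∨ (FWProgress C h h' ∧ n' ≤ n + 1)

theorem fwProgress_of_le_sub_sq_div {C h h' G : ℝ} (hC : 0 < C) (hh : 0 ≤ h) (hhG : h ≤ G)
    (hh' : h' ≤ h - G ^ 2 / (2 * C)) : FWProgress C h h' := by
  intro γ _
  have hsq : h ^ 2 / (2 * C) ≤ G ^ 2 / (2 * C) := by gcongr
  have hquad : h - h ^ 2 / (2 * C) ≤ (1 - γ) * h + γ ^ 2 * C / 2 := by
    rw [← sub_nonneg]
    have : (1 - γ) * h + γ ^ 2 * C / 2 - (h - h ^ 2 / (2 * C)) = (γ * C - h) ^ 2 / (2 * C) := by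
      field_simp; ring
    rw [this]; positivity
  linarith

theorem FWProgress.succ_mul_le {C h h' : ℝ} {k : ℕ} (hp : FWProgress C h h') (hC : 0 ≤ C)
    (hk : k * h ≤ 2 * C) : (k + 1) * h' ≤ 2 * C := by
  have hk0 : (0 : ℝ) ≤ k := k.cast_nonneg
  have hk2 : (0 : ℝ) < k + 2 := by positivity
  have hstep := hp (2 / (k + 2)) ⟨by positivity, (div_le_one hk2).2 (by linarith)⟩
  have hbound : (k + 2) ^ 2 * h' ≤ (k + 2) * (k * h) + 2 * C := by
    have : (k + 2) ^ 2 * ((1 - 2 / (k + 2)) * h + (2 / (k + 2)) ^ 2 * C / 2)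
        = (k + 2) * (k * h) + 2 * C := by field_simp; ring
    rw [← this]; gcongr
  have hk3 : (k + 2) ^ 2 * h' ≤ 2 * C * (k + 3) := by nlinarith
  refine le_of_mul_le_mul_left ?_ (by positivity : (0 : ℝ) < (k + 2) ^ 2)
  nlinarith

theorem exists_mul_le_of_steps {C : ℝ} (hC : 0 ≤ C) {h : ℕ → ℝ} {n : ℕ → ℕ} {T : ℕ}
    (hn0 : n 0 ≤ 1)
    (hstep : ∀ t < T, DropOrProgress C (h t) (h (t + 1)) (n t) (n (t + 1))) :
    ∃ k : ℕ, T + n T ≤ 2 * k + 1 ∧ k * h T ≤ 2 * C := by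
  induction T with
  | zero => exact ⟨0, by simpa using hn0, by simpa using hC⟩
  | succ T ih =>
    obtain ⟨k, hcount, hk⟩ := ih fun t ht => hstep t (ht.trans T.lt_succ_self)
    rcases hstep T T.lt_succ_self with ⟨hdrop, hcard⟩ | ⟨hprog, hcard⟩
    · exact ⟨k, by omega, (mul_le_mul_of_nonneg_left hdrop k.cast_nonneg).trans hk⟩
    · exact ⟨k + 1, by omega, by simpa using hprog.succ_mul_le hC hk⟩

theorem le_four_mul_div_of_steps {C : ℝ} (hC : 0 ≤ C) {h : ℕ → ℝ} {n : ℕ → ℕ} {T : ℕ}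
    (hT : 1 ≤ T) (hn0 : n 0 ≤ 1)
    (hstep : ∀ t < T, DropOrProgress C (h t) (h (t + 1)) (n t) (n (t + 1)))
    (hnT : 1 ≤ n T) (hhT : 0 ≤ h T) : h T ≤ 4 * C / T := by
  obtain ⟨k, hcount, hk⟩ := exists_mul_le_of_steps hC hn0 hstep
  have hTk : (T : ℝ) ≤ 2 * k := by exact_mod_cast (by omega : T ≤ 2 * k)
  rw [le_div_iff₀ (by exact_mod_cast hT)]
  nlinarith

theorem ConvexOn.add_fderiv_le {E : Type*} [NormedAddCommGroup E] [NormedSpace ℝ E]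
    {f : E → ℝ} {f' : E →L[ℝ] ℝ} {p : E} (hf : ConvexOn ℝ Set.univ f) (hf' : HasFDerivAt f f' p)
    (y : E) : f p + f' (y - p) ≤ f y := by
  let ℓ : ℝ →ᵃ[ℝ] E := AffineMap.lineMap p y
  have hder : HasDerivAt (f ∘ ℓ) (f' (y - p)) 0 :=
    (by simpa [ℓ] using hf' : HasFDerivAt f f' (ℓ 0)).comp_hasDerivAt 0 AffineMap.hasDerivAt_lineMap
  have hslope :=
    (hf.comp_affineMap ℓ).le_slope_of_hasDerivAt (Set.mem_univ 0) (Set.mem_univ 1) one_pos hder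
  simp only [slope_def_field, Function.comp_apply, AffineMap.lineMap_apply_one,
    AffineMap.lineMap_apply_zero, sub_zero, div_one, ℓ] at hslope
  linarith

section FrankWolfeStep

variable {E : Type*} [NormedAddCommGroup E] [InnerProductSpace ℝ E] {X : Set E} {f : E → ℝ}
  {g : E → E} {p v : E}

theorem sub_le_inner_of_forall_inner_le (hf : ConvexOn ℝ Set.univ f)
    (hg : HasFDerivAt f (innerSL ℝ (g p)) p) (hv : ∀ u ∈ X, ⟪g p, v⟫ ≤ ⟪g p, u⟫) {y : E}
    (hy : y ∈ X) : f p - f y ≤ ⟪g p, p - v⟫ := by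
  have hgrad : f p + ⟪g p, y - p⟫ ≤ f y := hf.add_fderiv_le hg y
  rw [inner_sub_right] at hgrad ⊢
  linarith [hv y hy]

variable {L D : ℝ}

theorem apply_add_smul_sub_le_of_smooth (hX : Convex ℝ X) (hL : 0 ≤ L)
    (hdiam : ∀ p ∈ X, ∀ q ∈ X, ‖p - q‖ ≤ D)
    (hsmooth : ∀ p ∈ X, ∀ q ∈ X, f q - f p ≤ ⟪g p, q - p⟫ + L / 2 * ‖q - p‖ ^ 2)
    (hp : p ∈ X) (hv : v ∈ X) {γ : ℝ} (hγ : γ ∈ Set.Icc (0 : ℝ) 1) :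
    f (p + γ • (v - p)) ≤ f p - γ * ⟪g p, p - v⟫ + γ ^ 2 * (L * D ^ 2) / 2 := by
  have hq : p + γ • (v - p) ∈ X := by
    simpa [AffineMap.lineMap_apply_module', add_comm] using hX.lineMap_mem hp hv hγ
  have hnorm : ‖γ • (v - p)‖ ^ 2 ≤ γ ^ 2 * D ^ 2 := by
    rw [norm_smul, Real.norm_of_nonneg hγ.1, mul_pow]
    gcongr
    exact hdiam v hv p hp
  have hupper := hsmooth p hp _ hq
  have hdir : ⟪g p, v - p⟫ = -⟪g p, p - v⟫ := by rw [← inner_neg_right, neg_sub]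
  rw [add_sub_cancel_left, real_inner_smul_right, hdir] at hupper
  nlinarith [mul_le_mul_of_nonneg_left hnorm hL]

theorem fwProgress_of_lineSearch (hX : Convex ℝ X) (hL : 0 ≤ L)
    (hdiam : ∀ p ∈ X, ∀ q ∈ X, ‖p - q‖ ≤ D)
    (hsmooth : ∀ p ∈ X, ∀ q ∈ X, f q - f p ≤ ⟪g p, q - p⟫ + L / 2 * ‖q - p‖ ^ 2)
    (hp : p ∈ X) (hv : v ∈ X) {q : E} (hq : ∀ γ ∈ Set.Icc (0 : ℝ) 1, f q ≤ f (p + γ • (v - p)))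
    {fstar : ℝ} (hgap : f p - fstar ≤ ⟪g p, p - v⟫) :
    FWProgress (L * D ^ 2) (f p - fstar) (f q - fstar) := by
  intro γ hγ
  have := apply_add_smul_sub_le_of_smooth hX hL hdiam hsmooth hp hv hγ
  nlinarith [hq γ hγ, mul_le_mul_of_nonneg_left hgap hγ.1]

end FrankWolfeStep

theorem corrective_frank_wolfe_sublinear_general
    {E : Type*} [NormedAddCommGroup E] [InnerProductSpace ℝ E] [DecidableEq E]
    (X : Set E) (hXconv : Convex ℝ X)
    (D L : ℝ) (hD : 0 < D) (hL : 0 < L)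
    (hdiam : ∀ p ∈ X, ∀ q ∈ X, ‖p - q‖ ≤ D)
    (f : E → ℝ) (g : E → E)
    (hconv : ConvexOn ℝ Set.univ f)
    (hdiff : ∀ p : E, HasFDerivAt f ((innerSL ℝ) (g p)) p)
    (hsmooth : ∀ p ∈ X, ∀ q ∈ X, f q - f p ≤ ⟪g p, q - p⟫ + L / 2 * ‖q - p‖ ^ 2)
    (T : ℕ) (hT : 1 ≤ T)
    (x : ℕ → E) (S : ℕ → Finset E) (a s v : ℕ → E)
    (hxX : ∀ t ≤ T, x t ∈ X)
    (hS0 : S 0 = {x 0})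
    (hxconv : ∀ t ≤ T, x t ∈ convexHull ℝ (S t : Set E))
    (hv : ∀ t < T, v t ∈ X ∧ ∀ u ∈ X, ⟪g (x t), v t⟫ ≤ ⟪g (x t), u⟫)
    (hcorrective : ∀ t < T, ⟪g (x t), a t - s t⟫ ≥ ⟪g (x t), x t - v t⟫ →
      ((f (x (t + 1)) ≤ f (x t) ∧ S (t + 1) ⊆ S t ∧ (S (t + 1)).card < (S t).card) ∨
       (f (x t) - f (x (t + 1)) ≥ ⟪g (x t), a t - s t⟫ ^ 2 / (2 * L * D ^ 2) ∧
         S (t + 1) ⊆ S t)))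
    (hfw : ∀ t < T, ¬(⟪g (x t), a t - s t⟫ ≥ ⟪g (x t), x t - v t⟫) →
      ∃ γ ∈ Set.Icc (0:ℝ) 1,
        x (t + 1) = x t + γ • (v t - x t) ∧
        (∀ γ' ∈ Set.Icc (0:ℝ) 1, f (x (t + 1)) ≤ f (x t + γ' • (v t - x t))) ∧
        S (t + 1) = insert (v t) (S t))
    (xm : E) (hxm : xm ∈ X) (hxmin : ∀ y ∈ X, f xm ≤ f y) :
    f (x T) - f xm ≤ 4 * L * D ^ 2 / T := by
  have hgap : ∀ t < T, f (x t) - f xm ≤ ⟪g (x t), x t - v t⟫ := fun t ht =>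
    sub_le_inner_of_forall_inner_le hconv (hdiff _) (hv t ht).2 hxm
  have hsteps : ∀ t < T, DropOrProgress (L * D ^ 2) (f (x t) - f xm) (f (x (t + 1)) - f xm)
      #(S t) #(S (t + 1)) := by
    intro t ht
    by_cases hc : ⟪g (x t), a t - s t⟫ ≥ ⟪g (x t), x t - v t⟫
    · rcases hcorrective t ht hc with ⟨hdrop, -, hcard⟩ | ⟨hdesc, hsub⟩
      · exact Or.inl ⟨by linarith, hcard⟩
      · refine Or.inr ⟨fwProgress_of_le_sub_sq_div (by positivity)
          (sub_nonneg.2 (hxmin _ (hxX t ht.le))) ((hgap t ht).trans hc) ?_,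
          (card_le_card hsub).trans (Nat.le_succ _)⟩
        rw [← mul_assoc]
        linarith
    · obtain ⟨γ, -, -, hls, hS⟩ := hfw t ht hc
      exact Or.inr ⟨fwProgress_of_lineSearch hXconv hL.le hdiam hsmooth (hxX t ht.le) (hv t ht).1
        hls (hgap t ht), hS ▸ card_insert_le _ _⟩
  have hST : 1 ≤ #(S T) :=
    card_pos.2 (coe_nonempty.1 (convexHull_nonempty_iff.1 ⟨_, hxconv T le_rfl⟩))
  rw [mul_assoc]
  exact le_four_mul_div_of_steps (h := fun t => f (x t) - f xm) (n := fun t => #(S t))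
    (by positivity) hT (by rw [hS0, card_singleton]) hsteps hST
    (sub_nonneg.2 (hxmin _ (hxX T le_rfl)))

/-- Sublinear convergence of the Corrective Frank-Wolfe algorithm: under the corrective-step
conditions (drop step, descent step, or exact-line-search Frank-Wolfe step), after `T`
iterations `f (x T) - f* ≤ 4 L D² / T`. -/
theorem corrective_frank_wolfe_sublinear
    {E : Type*} [NormedAddCommGroup E] [InnerProductSpace ℝ E] [FiniteDimensional ℝ E] [DecidableEq E]
    (X : Set E) (hXcomp : IsCompact X) (hXconv : Convex ℝ X)
    (D L : ℝ) (hD : 0 < D) (hL : 0 < L)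
    (hdiam : ∀ p ∈ X, ∀ q ∈ X, ‖p - q‖ ≤ D)
    (f : E → ℝ) (g : E → E)
    (hconv : ConvexOn ℝ Set.univ f)
    (hdiff : ∀ p : E, HasFDerivAt f ((innerSL ℝ) (g p)) p)
    (hsmooth : ∀ p ∈ X, ∀ q ∈ X, f q - f p ≤ ⟪g p, q - p⟫ + L / 2 * ‖q - p‖ ^ 2)
    (T : ℕ) (hT : 1 ≤ T)
    (x : ℕ → E) (S : ℕ → Finset E) (a s v : ℕ → E)
    (hxX : ∀ t ≤ T, x t ∈ X)
    (hSX : ∀ t ≤ T, (S t : Set E) ⊆ X)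
    (hS0 : S 0 = {x 0})
    (hxconv : ∀ t ≤ T, x t ∈ convexHull ℝ (S t : Set E))
    (ha : ∀ t < T, a t ∈ S t ∧ ∀ u ∈ S t, ⟪g (x t), u⟫ ≤ ⟪g (x t), a t⟫)
    (hs : ∀ t < T, s t ∈ S t ∧ ∀ u ∈ S t, ⟪g (x t), s t⟫ ≤ ⟪g (x t), u⟫)
    (hv : ∀ t < T, v t ∈ X ∧ ∀ u ∈ X, ⟪g (x t), v t⟫ ≤ ⟪g (x t), u⟫)
    (hcorrective : ∀ t < T, ⟪g (x t), a t - s t⟫ ≥ ⟪g (x t), x t - v t⟫ →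
      ((f (x (t + 1)) ≤ f (x t) ∧ S (t + 1) ⊆ S t ∧ (S (t + 1)).card < (S t).card) ∨
       (f (x t) - f (x (t + 1)) ≥ ⟪g (x t), a t - s t⟫ ^ 2 / (2 * L * D ^ 2) ∧
         S (t + 1) ⊆ S t)))
    (hfw : ∀ t < T, ¬(⟪g (x t), a t - s t⟫ ≥ ⟪g (x t), x t - v t⟫) →
      ∃ γ ∈ Set.Icc (0:ℝ) 1,
        x (t + 1) = x t + γ • (v t - x t) ∧
        (∀ γ' ∈ Set.Icc (0:ℝ) 1, f (x (t + 1)) ≤ f (x t + γ' • (v t - x t))) ∧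
        S (t + 1) = insert (v t) (S t))
    (xm : E) (hxm : xm ∈ X) (hxmin : ∀ y ∈ X, f xm ≤ f y) :
    f (x T) - f xm ≤ 4 * L * D ^ 2 / T :=
  corrective_frank_wolfe_sublinear_general X hXconv D L hD hL hdiam f g hconv hdiff hsmooth T hT x S
    a s v hxX hS0 hxconv hv hcorrective hfw xm hxm hxmin
end

section
/- Let E be a real inner product space, let f : E → ℝ be convex, differentiable, and L-smooth on E (L > 0). Let x, a, s ∈ E with d = a − s ≠ 0 and g = ⟨∇f(x), d⟩ ≥ 0, let γ_max > 0, and let γ* minimize γ ↦ f(x − γ d) over [0, γ_max], with x' = x − γ* d. Set γ̂ = g / (L ‖d‖²). Then f(x') ≤ f(x); moreover, if γ̂ ≤ γ_max then f(x) − f(x') ≥ g² / (2 L ‖d‖²), and if γ̂ > γ_max then γ_max is a minimizer of γ ↦ f(x − γ d) over [0, γ_max], i.e., f(x − γ_max d) ≤ f(x − γ d) for all γ ∈ [0, γ_max]. -/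
/-! Taking `γ = 0` and the short step `γ = γ̂` as competitors of `γ*`, the first two claims follow
from the quadratic upper bound of `L`-smoothness along the line `γ ↦ x - γ d`. For the drop step,
convexity and `L`-smoothness together make `∇f` `L`-Lipschitz (co-coercivity: compare the lower
and upper bounds at `q - L⁻¹ (∇f q - ∇f p)`), so `γ_max < γ̂` forces `⟨∇f(x - γ_max d), d⟩ ≥ 0`, and
then by convexity `γ ↦ f(x - γ d)` is nonincreasing on `[0, γ_max]`. -/

open RealInnerProductSpace Set

theorem ConvexOn.apply_sub_le_sub_of_hasFDerivAt {F : Type*} [NormedAddCommGroup F]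
    [NormedSpace ℝ F] {φ : F → ℝ} {φ' : F →L[ℝ] ℝ} {p : F} (hφ : ConvexOn ℝ univ φ)
    (hφ' : HasFDerivAt φ φ' p) (q : F) : φ' (q - p) ≤ φ q - φ p := by
  have hline : HasDerivAt (φ ∘ AffineMap.lineMap (k := ℝ) p q) (φ' (q - p)) 0 := by
    refine HasFDerivAt.comp_hasDerivAt (0 : ℝ) ?_ AffineMap.hasDerivAt_lineMap
    simpa using hφ'
  have := (hφ.comp_affineMap (AffineMap.lineMap p q)).le_slope_of_hasDerivAt
    (mem_univ 0) (mem_univ 1) one_pos hline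
  simpa [slope_def_field] using this

section SmoothConvex

variable {E : Type*} [NormedAddCommGroup E] [InnerProductSpace ℝ E] {f : E → ℝ} {g : E → E}
  {L : ℝ}

theorem apply_sub_smul_le_of_smooth
    (hsmooth : ∀ p q : E, f q - f p ≤ ⟪g p, q - p⟫ + L / 2 * ‖q - p‖ ^ 2) (x d : E) (t : ℝ) :
    f (x - t • d) ≤ f x - t * ⟪g x, d⟫ + L / 2 * t ^ 2 * ‖d‖ ^ 2 := by
  have h := hsmooth x (x - t • d)
  rw [sub_sub_cancel_left, inner_neg_right, real_inner_smul_right, norm_neg, norm_smul, mul_pow,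
    Real.norm_eq_abs, sq_abs] at h
  linarith

theorem apply_sub_inner_div_smul_le_of_smooth
    (hsmooth : ∀ p q : E, f q - f p ≤ ⟪g p, q - p⟫ + L / 2 * ‖q - p‖ ^ 2) (hL : L ≠ 0)
    (x : E) {d : E} (hd : d ≠ 0) :
    f (x - (⟪g x, d⟫ / (L * ‖d‖ ^ 2)) • d) ≤ f x - ⟪g x, d⟫ ^ 2 / (2 * L * ‖d‖ ^ 2) := by
  have hd' : ‖d‖ ≠ 0 := norm_ne_zero_iff.mpr hd
  convert apply_sub_smul_le_of_smooth hsmooth x d (⟪g x, d⟫ / (L * ‖d‖ ^ 2)) using 1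
  field_simp
  ring

theorem norm_sub_sq_div_le_of_smooth (hL : 0 < L) (hlower : ∀ p q : E, ⟪g p, q - p⟫ ≤ f q - f p)
    (hsmooth : ∀ p q : E, f q - f p ≤ ⟪g p, q - p⟫ + L / 2 * ‖q - p‖ ^ 2) (p q : E) :
    ‖g q - g p‖ ^ 2 / (2 * L) ≤ f q - f p - ⟪g p, q - p⟫ := by
  set v := g q - g p
  have hlow := hlower p (q - L⁻¹ • v)
  rw [sub_right_comm, inner_sub_right, real_inner_smul_right] at hlow
  have hup := apply_sub_smul_le_of_smooth hsmooth q v L⁻¹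
  have hv : ⟪g q, v⟫ - ⟪g p, v⟫ = ‖v‖ ^ 2 := by
    rw [← inner_sub_left, real_inner_self_eq_norm_sq]
  have hcoef : L⁻¹ * ‖v‖ ^ 2 - L / 2 * L⁻¹ ^ 2 * ‖v‖ ^ 2 = ‖v‖ ^ 2 / (2 * L) := by
    field_simp
    ring
  linear_combination hlow + hup - L⁻¹ * hv - hcoef

theorem norm_sub_le_of_smooth (hL : 0 < L) (hlower : ∀ p q : E, ⟪g p, q - p⟫ ≤ f q - f p)
    (hsmooth : ∀ p q : E, f q - f p ≤ ⟪g p, q - p⟫ + L / 2 * ‖q - p‖ ^ 2) (p q : E) :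
    ‖g q - g p‖ ≤ L * ‖q - p‖ := by
  have h₁ := norm_sub_sq_div_le_of_smooth hL hlower hsmooth p q
  have h₂ := norm_sub_sq_div_le_of_smooth hL hlower hsmooth q p
  rw [norm_sub_rev, ← neg_sub q p, inner_neg_right] at h₂
  have hcs := real_inner_le_norm (g q - g p) (q - p)
  rw [inner_sub_left] at hcs
  have hsq : ‖g q - g p‖ ^ 2 ≤ L * ‖g q - g p‖ * ‖q - p‖ := by
    have : ‖g q - g p‖ ^ 2 / (2 * L) * (2 * L) = ‖g q - g p‖ ^ 2 := by field_simp
    nlinarith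
  rcases (norm_nonneg (g q - g p)).eq_or_lt with h0 | h0
  · rw [← h0]
    positivity
  · nlinarith

theorem inner_sub_smul_nonneg_of_lipschitz (hlip : ∀ p q : E, ‖g q - g p‖ ≤ L * ‖q - p‖)
    {x d : E} {t : ℝ} (ht : 0 ≤ t) (hle : t * (L * ‖d‖ ^ 2) ≤ ⟪g x, d⟫) :
    0 ≤ ⟪g (x - t • d), d⟫ := by
  have hl := hlip (x - t • d) x
  rw [sub_sub_cancel, norm_smul, Real.norm_of_nonneg ht] at hl
  have hcs := real_inner_le_norm (g x - g (x - t • d)) d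
  rw [inner_sub_left] at hcs
  nlinarith [mul_le_mul_of_nonneg_right hl (norm_nonneg d)]

theorem apply_sub_smul_le_of_inner_nonneg (hlower : ∀ p q : E, ⟪g p, q - p⟫ ≤ f q - f p)
    {x d : E} {s t : ℝ} (hts : t ≤ s) (hd : 0 ≤ ⟪g (x - s • d), d⟫) :
    f (x - s • d) ≤ f (x - t • d) := by
  have h := hlower (x - s • d) (x - t • d)
  rw [sub_sub_sub_cancel_left, ← sub_smul, real_inner_smul_right] at h
  nlinarith [mul_nonneg (sub_nonneg.mpr hts) hd]

end SmoothConvex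

theorem pairwise_step_cases_general
    {E : Type*} [NormedAddCommGroup E] [InnerProductSpace ℝ E]
    (f : E → ℝ) (g : E → E) (L : ℝ) (hL : 0 < L)
    (hconv : ConvexOn ℝ Set.univ f)
    (hdiff : ∀ p : E, HasFDerivAt f ((innerSL ℝ) (g p)) p)
    (hsmooth : ∀ p q : E, f q - f p ≤ ⟪g p, q - p⟫ + L / 2 * ‖q - p‖ ^ 2)
    (x a s : E) (hd : a - s ≠ 0) (hgap : ⟪g x, a - s⟫ ≥ 0)
    (γmax : ℝ) (hγmax : 0 < γmax)
    (γstar : ℝ)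
    (hγmin : ∀ γ ∈ Set.Icc (0:ℝ) γmax, f (x - γstar • (a - s)) ≤ f (x - γ • (a - s))) :
    f (x - γstar • (a - s)) ≤ f x ∧
    (⟪g x, a - s⟫ / (L * ‖a - s‖ ^ 2) ≤ γmax →
      f x - f (x - γstar • (a - s)) ≥ ⟪g x, a - s⟫ ^ 2 / (2 * L * ‖a - s‖ ^ 2)) ∧
    (⟪g x, a - s⟫ / (L * ‖a - s‖ ^ 2) > γmax →
      ∀ γ ∈ Set.Icc (0:ℝ) γmax, f (x - γmax • (a - s)) ≤ f (x - γ • (a - s))) := by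
  have hlower : ∀ p q : E, ⟪g p, q - p⟫ ≤ f q - f p := fun p q => by
    simpa using hconv.apply_sub_le_sub_of_hasFDerivAt (hdiff p) q
  have hLd : 0 < L * ‖a - s‖ ^ 2 := by
    have := norm_pos_iff.mpr hd
    positivity
  refine ⟨by simpa using hγmin 0 ⟨le_rfl, hγmax.le⟩, fun hshort => ?_, fun hdrop γ hγ => ?_⟩
  · have hstar := hγmin _ ⟨div_nonneg hgap hLd.le, hshort⟩
    linarith [apply_sub_inner_div_smul_le_of_smooth hsmooth hL.ne' x hd]
  · refine apply_sub_smul_le_of_inner_nonneg hlower hγ.2 ?_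
    exact inner_sub_smul_nonneg_of_lipschitz (norm_sub_le_of_smooth hL hlower hsmooth)
      hγmax.le ((lt_div_iff₀ hLd).mp hdrop).le

/-- Local pairwise step of the Corrective Frank-Wolfe framework: line search in the direction
`-(a - s)` over `[0, γ_max]` never increases `f`; if the short step `γ̂ = g/(L‖d‖²)` fits in
`[0, γ_max]` the step makes progress `g²/(2L‖d‖²)`, and otherwise `γ_max` is itself a
minimizer of the line-search problem (drop step). -/
theorem pairwise_step_cases
    {E : Type*} [NormedAddCommGroup E] [InnerProductSpace ℝ E]
    (f : E → ℝ) (g : E → E) (L : ℝ) (hL : 0 < L)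
    (hconv : ConvexOn ℝ Set.univ f)
    (hdiff : ∀ p : E, HasFDerivAt f ((innerSL ℝ) (g p)) p)
    (hsmooth : ∀ p q : E, f q - f p ≤ ⟪g p, q - p⟫ + L / 2 * ‖q - p‖ ^ 2)
    (x a s : E) (hd : a - s ≠ 0) (hgap : ⟪g x, a - s⟫ ≥ 0)
    (γmax : ℝ) (hγmax : 0 < γmax)
    (γstar : ℝ) (hγstar : γstar ∈ Set.Icc (0:ℝ) γmax)
    (hγmin : ∀ γ ∈ Set.Icc (0:ℝ) γmax, f (x - γstar • (a - s)) ≤ f (x - γ • (a - s))) :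
    f (x - γstar • (a - s)) ≤ f x ∧
    (⟪g x, a - s⟫ / (L * ‖a - s‖ ^ 2) ≤ γmax →
      f x - f (x - γstar • (a - s)) ≥ ⟪g x, a - s⟫ ^ 2 / (2 * L * ‖a - s‖ ^ 2)) ∧
    (⟪g x, a - s⟫ / (L * ‖a - s‖ ^ 2) > γmax →
      ∀ γ ∈ Set.Icc (0:ℝ) γmax, f (x - γmax • (a - s)) ≤ f (x - γ • (a - s))) :=
  pairwise_step_cases_general f g L hL hconv hdiff hsmooth x a s hd hgap γmax hγmax γstar hγmin
end

section
/- Let f : ℝⁿ → ℝ be convex, differentiable, and L-smooth on ℝⁿ (L > 0), and let P, Q ⊆ ℝⁿ be nonempty compact convex sets with P ∩ Q ≠ ∅. Let the sequences (x_t) ⊆ P and (y_t) ⊆ Q be generated by the Split Conditional Gradient iteration with λ_t = ln(t+2) and γ_t = 2/(√(t+2)·ln(t+2)): x̄_t = (x_t+y_t)/2, v_t minimizes ⟨∇f(x̄_t) + λ_t(x_t − x̄_t), ·⟩ over P, w_t minimizes ⟨∇f(x̄_t) + λ_t(y_t − x̄_t), ·⟩ over Q, x_{t+1} = x_t + γ_t(v_t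 − x_t), y_{t+1} = y_t + γ_t(w_t − y_t). Then ‖x_t − y_t‖ → 0 as t → ∞, and every accumulation point (x̃, ỹ) of the sequence ((x_t, y_t)) satisfies x̃ = ỹ ∈ P ∩ Q and f(x̃) = min_{z ∈ P∩Q} f(z). -/
/-!
With `x̄ = (x + y)/2`, the oracle directions `∇f(x̄) + λ(x - x̄)` and `∇f(x̄) + λ(y - x̄)`
are twice the partial gradients of the penalized objective
`Φ_λ(x, y) = f(x̄) + (λ/8)‖x - y‖²`. For any `z ∈ P ∩ Q`, the descent lemma for `f` at `x̄_t`,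
the optimality of `v_t, w_t` tested against `z`, and the gradient inequality
`f(x̄_t) + ⟪∇f(x̄_t), z - x̄_t⟫ ≤ f(z)` give `h_{t+1} ≤ (1 - γ_t) h_t + γ_t r_t` for
`h_t = Φ_{λ_t}(x_t, y_t) - f(z)`, where `r_t → 0` because `γ_t λ_t → 0` and
`(λ_{t+1} - λ_t)/γ_t → 0`. As `∑ γ_t = ∞`, eventually `h_t ≤ ε`. Since `f(x̄_t)` is bounded
below on the bounded iterates, `λ_t ‖x_t - y_t‖²` stays bounded and `λ_t → ∞` forces
`x_t - y_t → 0`; closedness of `P`, `Q` and of the sublevel sets of `f` then passes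
feasibility and `f(x̄) ≤ f(z)` to every cluster point.
-/

open RealInnerProductSpace Filter Topology Finset

lemma exists_le_of_descent {h γ : ℕ → ℝ} {B c ε : ℝ} {T : ℕ} (hc : 0 < c)
    (hB : ∀ t, B ≤ h t)
    (hγ : Tendsto (fun N ↦ ∑ t ∈ range N, γ t) atTop atTop)
    (hdesc : ∀ t ≥ T, ε < h t → h (t + 1) ≤ h t - c * γ t) :
    ∃ t ≥ T, h t ≤ ε := by
  by_contra! hgt
  have hdecay :
      ∀ t ≥ T, h t ≤ h T - c * (∑ s ∈ range t, γ s - ∑ s ∈ range T, γ s) := by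
    intro t ht
    induction t, ht using Nat.le_induction with
    | base => simp
    | succ t ht ih =>
      rw [sum_range_succ]
      linarith [hdesc t ht (hgt t ht)]
  obtain ⟨t, hsum, ht⟩ := ((hγ.eventually_ge_atTop
    (∑ s ∈ range T, γ s + (h T - B + 1) / c)).and (eventually_ge_atTop T)).exists
  have hgap : h T - B + 1 ≤ c * (∑ s ∈ range t, γ s - ∑ s ∈ range T, γ s) :=
    (div_le_iff₀' hc).1 (by linarith)
  linarith [hdecay t ht, hB t]

theorem eventually_le_of_le_one_sub_mul_add_mul {h γ r : ℕ → ℝ} {B : ℝ}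
    (hB : ∀ t, B ≤ h t) (hrec : ∀ t, h (t + 1) ≤ (1 - γ t) * h t + γ t * r t)
    (hγ0 : ∀ t, 0 ≤ γ t) (hγ1 : ∀ᶠ t in atTop, γ t ≤ 1)
    (hγ : Tendsto (fun N ↦ ∑ t ∈ range N, γ t) atTop atTop)
    (hr : Tendsto r atTop (𝓝 0)) {ε : ℝ} (hε : 0 < ε) :
    ∀ᶠ t in atTop, h t ≤ ε := by
  obtain ⟨T, hT⟩ := eventually_atTop.1 (hγ1.and (hr.eventually_le_const (half_pos hε)))
  obtain ⟨t₀, ht₀T, ht₀⟩ : ∃ t ≥ T, h t ≤ ε := by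
    refine exists_le_of_descent (half_pos hε) hB hγ fun t ht hεh ↦ ?_
    have hgap : ε / 2 ≤ h t - r t := by linarith [(hT t ht).2]
    linarith [hrec t, mul_le_mul_of_nonneg_left hgap (hγ0 t)]
  refine eventually_atTop.2 ⟨t₀, fun t ht ↦ ?_⟩
  induction t, ht using Nat.le_induction with
  | base => exact ht₀
  | succ t ht ih =>
    obtain ⟨hγt, hrt⟩ := hT t (ht₀T.trans ht)
    linarith [hrec t, mul_le_mul_of_nonneg_left ih (sub_nonneg.2 hγt),
      mul_le_mul_of_nonneg_left hrt (hγ0 t), mul_nonneg (hγ0 t) hε.le]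

structure IsPenaltySchedule (Λ γ : ℕ → ℝ) : Prop where
  penalty_zero_nonneg : 0 ≤ Λ 0
  penalty_mono : Monotone Λ
  tendsto_penalty : Tendsto Λ atTop atTop
  step_pos : ∀ t, 0 < γ t
  tendsto_step : Tendsto γ atTop (𝓝 0)
  tendsto_step_mul_penalty : Tendsto (fun t ↦ γ t * Λ t) atTop (𝓝 0)
  tendsto_sum_step : Tendsto (fun N ↦ ∑ t ∈ range N, γ t) atTop atTop
  tendsto_penalty_increment_div_step : Tendsto (fun t ↦ (Λ (t + 1) - Λ t) / γ t) atTop (𝓝 0)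

lemma IsPenaltySchedule.penalty_nonneg {Λ γ : ℕ → ℝ} (h : IsPenaltySchedule Λ γ)
    (t : ℕ) : 0 ≤ Λ t :=
  h.penalty_zero_nonneg.trans (h.penalty_mono t.zero_le)

lemma Real.log_add_one_sub_log_le {u : ℝ} (hu : 0 < u) :
    Real.log (u + 1) - Real.log u ≤ u⁻¹ := by
  rw [← Real.log_div (by positivity) hu.ne']
  calc Real.log ((u + 1) / u) ≤ (u + 1) / u - 1 := Real.log_le_sub_one_of_pos (by positivity)
    _ = u⁻¹ := by field_simp; ring

lemma Real.sqrt_mul_log_le {u : ℝ} (hu : 0 ≤ u) : √u * Real.log u ≤ 2 * u := by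
  have h := Real.log_le_rpow_div hu (by norm_num : (0 : ℝ) < 1 / 2)
  rw [← Real.sqrt_eq_rpow] at h
  calc √u * Real.log u ≤ √u * (√u / (1 / 2)) :=
        mul_le_mul_of_nonneg_left h (Real.sqrt_nonneg u)
    _ = 2 * (√u * √u) := by ring
    _ = 2 * u := by rw [Real.mul_self_sqrt hu]

lemma Real.tendsto_log_div_sqrt_atTop : Tendsto (fun u ↦ Real.log u / √u) atTop (𝓝 0) := by
  refine (isLittleO_log_rpow_atTop (by norm_num : (0 : ℝ) < 1 / 2)).tendsto_div_nhds_zero.congr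
    fun u ↦ ?_
  rw [Real.sqrt_eq_rpow]

lemma tendsto_natCast_add_two_atTop : Tendsto (fun t : ℕ ↦ (t : ℝ) + 2) atTop atTop :=
  tendsto_atTop_add_const_right _ 2 tendsto_natCast_atTop_atTop

lemma log_natCast_add_two_pos (t : ℕ) : 0 < Real.log ((t : ℝ) + 2) :=
  Real.log_pos (by linarith [t.cast_nonneg' (α := ℝ)])

lemma tendsto_sum_two_div_sqrt_mul_log_atTop :
    Tendsto (fun N ↦ ∑ t ∈ range N, 2 / (√((t : ℝ) + 2) * Real.log ((t : ℝ) + 2)))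
      atTop atTop := by
  have hharmonic := Real.tendsto_sum_range_one_div_nat_succ_atTop.const_mul_atTop
    (by norm_num : (0 : ℝ) < 1 / 2)
  refine tendsto_atTop_mono (fun N ↦ ?_) hharmonic
  rw [mul_sum]
  refine sum_le_sum fun t _ ↦ ?_
  have hu : (0 : ℝ) < t + 2 := by positivity
  calc 1 / 2 * (1 / ((t : ℝ) + 1)) ≤ 2 / (2 * ((t : ℝ) + 2)) := by
        field_simp; linarith
    _ ≤ _ := div_le_div_of_nonneg_left zero_le_two
      (mul_pos (Real.sqrt_pos.2 hu) (log_natCast_add_two_pos t)) (Real.sqrt_mul_log_le hu.le)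

lemma log_succ_sub_log_div_le (t : ℕ) :
    (Real.log (((t + 1 : ℕ) : ℝ) + 2) - Real.log ((t : ℝ) + 2)) /
        (2 / (√((t : ℝ) + 2) * Real.log ((t : ℝ) + 2))) ≤
      1 / 2 * (Real.log ((t : ℝ) + 2) / √((t : ℝ) + 2)) := by
  have hu : (0 : ℝ) < t + 2 := by positivity
  have hsqrt := Real.sqrt_pos.2 hu
  rw [show ((t + 1 : ℕ) : ℝ) + 2 = ((t : ℝ) + 2) + 1 by push_cast; ring, div_div_eq_mul_div]
  calc _ ≤ ((t : ℝ) + 2)⁻¹ * (√((t : ℝ) + 2) * Real.log ((t : ℝ) + 2)) / 2 := by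
        gcongr
        · exact mul_nonneg hsqrt.le (log_natCast_add_two_pos t).le
        · exact Real.log_add_one_sub_log_le hu
    _ = _ := by field_simp; rw [Real.sq_sqrt hu.le]

theorem isPenaltySchedule_log :
    IsPenaltySchedule (fun t : ℕ ↦ Real.log ((t : ℝ) + 2))
      (fun t : ℕ ↦ 2 / (√((t : ℝ) + 2) * Real.log ((t : ℝ) + 2))) := by
  have hstep_pos (t : ℕ) : 0 < 2 / (√((t : ℝ) + 2) * Real.log ((t : ℝ) + 2)) :=
    div_pos two_pos (mul_pos (Real.sqrt_pos.2 (by positivity)) (log_natCast_add_two_pos t))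
  have hlog := Real.tendsto_log_atTop.comp tendsto_natCast_add_two_atTop
  have hinv_sqrt : Tendsto (fun t : ℕ ↦ 2 / √((t : ℝ) + 2)) atTop (𝓝 0) :=
    tendsto_const_nhds.div_atTop (Real.tendsto_sqrt_atTop.comp tendsto_natCast_add_two_atTop)
  have hmono : Monotone fun t : ℕ ↦ Real.log ((t : ℝ) + 2) := fun s t hst ↦
    Real.log_le_log (by positivity) (by gcongr)
  refine ⟨(log_natCast_add_two_pos 0).le, hmono, hlog, hstep_pos, ?_, ?_,
    tendsto_sum_two_div_sqrt_mul_log_atTop, ?_⟩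
  · have := hinv_sqrt.mul hlog.inv_tendsto_atTop
    rw [mul_zero] at this
    refine this.congr fun t ↦ ?_
    simp only [Function.comp_apply, Pi.inv_apply]
    ring
  · refine hinv_sqrt.congr fun t ↦ ?_
    have := (log_natCast_add_two_pos t).ne'
    field_simp
  · have hbound :=
      (Real.tendsto_log_div_sqrt_atTop.comp tendsto_natCast_add_two_atTop).const_mul (1 / 2)
    rw [mul_zero] at hbound
    exact squeeze_zero (fun t ↦ div_nonneg (sub_nonneg.2 (hmono t.le_succ)) (hstep_pos t).le)
      log_succ_sub_log_div_le hbound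

section SplitConditionalGradient

variable {E : Type*} [NormedAddCommGroup E] [InnerProductSpace ℝ E]

theorem ConvexOn.add_inner_le_of_hasGradientAt [CompleteSpace E] {f : E → ℝ} {G m : E}
    (hf : ConvexOn ℝ Set.univ f) (hG : HasGradientAt f G m) (z : E) :
    f m + ⟪G, z - m⟫ ≤ f z := by
  have hG' := hG.hasFDerivAt
  rw [← AffineMap.lineMap_apply_zero (k := ℝ) m z] at hG'
  have hline : HasDerivAt (f ∘ AffineMap.lineMap (k := ℝ) m z) ⟪G, z - m⟫ 0 := by
    simpa using hG'.comp_hasDerivAt (0 : ℝ) AffineMap.hasDerivAt_lineMap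
  have := (hf.comp_affineMap (AffineMap.lineMap m z)).le_slope_of_hasDerivAt
    (Set.mem_univ _) (Set.mem_univ _) zero_lt_one hline
  simp only [slope_def_field, Function.comp_apply, AffineMap.lineMap_apply_one,
    AffineMap.lineMap_apply_zero, sub_zero, div_one] at this
  linarith

/-- The two oracle optimality conditions tested at a common point `z`, in the coordinates
`a = v - x`, `b = w - y`, `c = z - x̄`, `d = x - y`. -/
lemma inner_lmo_pair_le {G a b c d : E} {Λ : ℝ}
    (h₁ : ⟪G + (Λ / 2) • d, a + (2:ℝ)⁻¹ • d - c⟫ ≤ 0)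
    (h₂ : ⟪G - (Λ / 2) • d, b - (2:ℝ)⁻¹ • d - c⟫ ≤ 0) :
    ⟪G, a + b⟫ + Λ / 2 * ⟪d, a - b⟫ + Λ / 2 * ‖d‖ ^ 2 ≤ 2 * ⟪G, c⟫ := by
  simp only [inner_add_left, inner_sub_left, inner_add_right, inner_sub_right, inner_smul_left,
    inner_smul_right, real_inner_self_eq_norm_sq, RCLike.conj_to_real] at h₁ h₂ ⊢
  linarith

/-- `Φ_λ(x, y)`: twice its partial gradients are the directions queried from the two linear
minimization oracles. -/
noncomputable def penalizedObjective (f : E → ℝ) (Λ : ℝ) (x y : E) : ℝ :=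
  f ((2:ℝ)⁻¹ • (x + y)) + Λ / 8 * ‖x - y‖ ^ 2

theorem penalizedObjective_step_le [CompleteSpace E] {f : E → ℝ} {g : E → E} {L : ℝ}
    (hL : 0 ≤ L) (hconv : ConvexOn ℝ Set.univ f) (hdiff : ∀ p, HasGradientAt f (g p) p)
    (hsmooth : ∀ p q, f q - f p ≤ ⟪g p, q - p⟫ + L / 2 * ‖q - p‖ ^ 2)
    {Λ Λ' γ D : ℝ} (hΛ : 0 ≤ Λ) (hΛΛ' : Λ ≤ Λ') (hγ : 0 ≤ γ) {x y v w z : E}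
    (hv : ⟪g ((2:ℝ)⁻¹ • (x + y)) + Λ • (x - (2:ℝ)⁻¹ • (x + y)), v⟫ ≤
      ⟪g ((2:ℝ)⁻¹ • (x + y)) + Λ • (x - (2:ℝ)⁻¹ • (x + y)), z⟫)
    (hw : ⟪g ((2:ℝ)⁻¹ • (x + y)) + Λ • (y - (2:ℝ)⁻¹ • (x + y)), w⟫ ≤
      ⟪g ((2:ℝ)⁻¹ • (x + y)) + Λ • (y - (2:ℝ)⁻¹ • (x + y)), z⟫)
    (hvx : ‖v - x‖ ≤ D) (hwy : ‖w - y‖ ≤ D)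
    (hxy' : ‖(x + γ • (v - x)) - (y + γ • (w - y))‖ ≤ D) :
    penalizedObjective f Λ' (x + γ • (v - x)) (y + γ • (w - y)) - f z ≤
      (1 - γ) * (penalizedObjective f Λ x y - f z)
        + γ ^ 2 * (L + Λ) * D ^ 2 / 2 + (Λ' - Λ) * D ^ 2 / 8 := by
  unfold penalizedObjective
  set m := (2:ℝ)⁻¹ • (x + y)
  have hstep : (2:ℝ)⁻¹ • (x + γ • (v - x) + (y + γ • (w - y))) - m
      = (γ / 2) • ((v - x) + (w - y)) := by module
  have hgap : (x + γ • (v - x)) - (y + γ • (w - y))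
      = (x - y) + γ • ((v - x) - (w - y)) := by module
  have horacle : ⟪g m, (v - x) + (w - y)⟫ + Λ / 2 * ⟪x - y, (v - x) - (w - y)⟫
      + Λ / 2 * ‖x - y‖ ^ 2 ≤ 2 * (f z - f m) := by
    refine (inner_lmo_pair_le ?_ ?_).trans
      (by linarith [hconv.add_inner_le_of_hasGradientAt (hdiff m) z])
    · rw [show (v - x) + (2:ℝ)⁻¹ • (x - y) - (z - m) = v - z by module,
        show (Λ / 2) • (x - y) = Λ • (x - m) by module, inner_sub_right]
      linarith
    · rw [show (w - y) - (2:ℝ)⁻¹ • (x - y) - (z - m) = w - z by module,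
        show g m - (Λ / 2) • (x - y) = g m + Λ • (y - m) by module, inner_sub_right]
      linarith
  have hdescent := hsmooth m ((2:ℝ)⁻¹ • (x + γ • (v - x) + (y + γ • (w - y))))
  rw [hstep, inner_smul_right, norm_smul, mul_pow, Real.norm_eq_abs, sq_abs] at hdescent
  have hgap_sq : ‖(x + γ • (v - x)) - (y + γ • (w - y))‖ ^ 2 = ‖x - y‖ ^ 2
      + 2 * γ * ⟪x - y, (v - x) - (w - y)⟫ + γ ^ 2 * ‖(v - x) - (w - y)‖ ^ 2 := by
    rw [hgap, norm_add_sq_real, inner_smul_right, norm_smul, mul_pow, Real.norm_eq_abs, sq_abs]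
    ring
  have hadd_sq : ‖(v - x) + (w - y)‖ ^ 2 ≤ (2 * D) ^ 2 :=
    pow_le_pow_left₀ (norm_nonneg _) ((norm_add_le _ _).trans (by linarith)) 2
  have hsub_sq : ‖(v - x) - (w - y)‖ ^ 2 ≤ (2 * D) ^ 2 :=
    pow_le_pow_left₀ (norm_nonneg _) ((norm_sub_le _ _).trans (by linarith)) 2
  have hpenalty_gap := congrArg (Λ / 8 * ·) hgap_sq
  linarith [mul_le_mul_of_nonneg_left horacle hγ,
    mul_le_mul_of_nonneg_left hadd_sq (by positivity : 0 ≤ L * γ ^ 2),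
    mul_le_mul_of_nonneg_left hsub_sq (by positivity : 0 ≤ Λ * γ ^ 2),
    mul_le_mul_of_nonneg_left (pow_le_pow_left₀ (norm_nonneg _) hxy' 2) (sub_nonneg.2 hΛΛ'),
    mul_nonneg (mul_nonneg hγ hΛ) (sq_nonneg ‖x - y‖)]

lemma apply_midpoint_le_penalizedObjective {f : E → ℝ} {Λ : ℝ} (hΛ : 0 ≤ Λ) (x y : E) :
    f ((2:ℝ)⁻¹ • (x + y)) ≤ penalizedObjective f Λ x y :=
  le_add_of_nonneg_right (by positivity)

theorem ConvexOn.sub_norm_mul_diam_le_apply_midpoint [CompleteSpace E] {f : E → ℝ}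
    {G x y z : E} {S : Set E} (hf : ConvexOn ℝ Set.univ f) (hG : HasGradientAt f G z)
    (hS : Bornology.IsBounded S) (hx : x ∈ S) (hy : y ∈ S) (hz : z ∈ S) :
    f z - ‖G‖ * Metric.diam S ≤ f ((2:ℝ)⁻¹ • (x + y)) := by
  have hmid : (2:ℝ)⁻¹ • (x + y) ∈ Metric.closedBall z (Metric.diam S) := by
    rw [smul_add]
    exact convex_closedBall _ _ (Metric.dist_le_diam_of_mem hS hx hz)
      (Metric.dist_le_diam_of_mem hS hy hz) (by norm_num) (by norm_num) (by norm_num)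
  rw [Metric.mem_closedBall, dist_eq_norm] at hmid
  have hcs := neg_le_of_abs_le (abs_real_inner_le_norm G ((2:ℝ)⁻¹ • (x + y) - z))
  have hbound := mul_le_mul_of_nonneg_left hmid (norm_nonneg G)
  linarith [hf.add_inner_le_of_hasGradientAt hG ((2:ℝ)⁻¹ • (x + y))]

structure IsSplitCondGradSeq (g : E → E) (P Q : Set E) (Λ γ : ℕ → ℝ)
    (x y v w : ℕ → E) : Prop where
  left_mem : ∀ t, x t ∈ P
  right_mem : ∀ t, y t ∈ Q
  left_oracle : ∀ t, v t ∈ P ∧ ∀ u ∈ P,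
    ⟪g ((2:ℝ)⁻¹ • (x t + y t)) + Λ t • (x t - (2:ℝ)⁻¹ • (x t + y t)), v t⟫ ≤
      ⟪g ((2:ℝ)⁻¹ • (x t + y t)) + Λ t • (x t - (2:ℝ)⁻¹ • (x t + y t)), u⟫
  right_oracle : ∀ t, w t ∈ Q ∧ ∀ u ∈ Q,
    ⟪g ((2:ℝ)⁻¹ • (x t + y t)) + Λ t • (y t - (2:ℝ)⁻¹ • (x t + y t)), w t⟫ ≤
      ⟪g ((2:ℝ)⁻¹ • (x t + y t)) + Λ t • (y t - (2:ℝ)⁻¹ • (x t + y t)), u⟫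
  left_update : ∀ t, x (t + 1) = x t + γ t • (v t - x t)
  right_update : ∀ t, y (t + 1) = y t + γ t • (w t - y t)

namespace IsSplitCondGradSeq

variable [CompleteSpace E] {f : E → ℝ} {g : E → E} {L : ℝ} {P Q : Set E}
  {Λ γ : ℕ → ℝ} {x y v w : ℕ → E}

theorem penalizedObjective_succ_le (hs : IsSplitCondGradSeq g P Q Λ γ x y v w)
    (hsched : IsPenaltySchedule Λ γ) (hL : 0 ≤ L) (hconv : ConvexOn ℝ Set.univ f)
    (hdiff : ∀ p, HasGradientAt f (g p) p)
    (hsmooth : ∀ p q, f q - f p ≤ ⟪g p, q - p⟫ + L / 2 * ‖q - p‖ ^ 2)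
    (hbdd : Bornology.IsBounded (P ∪ Q)) {z : E} (hz : z ∈ P ∩ Q) (t : ℕ) :
    penalizedObjective f (Λ (t + 1)) (x (t + 1)) (y (t + 1)) - f z ≤
      (1 - γ t) * (penalizedObjective f (Λ t) (x t) (y t) - f z) +
        γ t * ((γ t * L + γ t * Λ t) * Metric.diam (P ∪ Q) ^ 2 / 2 +
          (Λ (t + 1) - Λ t) / γ t * Metric.diam (P ∪ Q) ^ 2 / 8) := by
  have hdist {p q : E} (hp : p ∈ P ∪ Q) (hq : q ∈ P ∪ Q) :
      ‖p - q‖ ≤ Metric.diam (P ∪ Q) :=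
    dist_eq_norm p q ▸ Metric.dist_le_diam_of_mem hbdd hp hq
  have hstep := penalizedObjective_step_le hL hconv hdiff hsmooth (hsched.penalty_nonneg t)
    (hsched.penalty_mono (t.le_add_right 1)) (hsched.step_pos t).le
    ((hs.left_oracle t).2 z hz.1) ((hs.right_oracle t).2 z hz.2)
    (hdist (.inl (hs.left_oracle t).1) (.inl (hs.left_mem t)))
    (hdist (.inr (hs.right_oracle t).1) (.inr (hs.right_mem t)))
    (hs.left_update t ▸ hs.right_update t ▸
      hdist (.inl (hs.left_mem (t + 1))) (.inr (hs.right_mem (t + 1))))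
  rw [hs.left_update, hs.right_update]
  refine hstep.trans_eq ?_
  have hγ := (hsched.step_pos t).ne'
  field_simp
  ring

theorem eventually_penalizedObjective_le (hs : IsSplitCondGradSeq g P Q Λ γ x y v w)
    (hsched : IsPenaltySchedule Λ γ) (hL : 0 ≤ L) (hconv : ConvexOn ℝ Set.univ f)
    (hdiff : ∀ p, HasGradientAt f (g p) p)
    (hsmooth : ∀ p q, f q - f p ≤ ⟪g p, q - p⟫ + L / 2 * ‖q - p‖ ^ 2)
    (hbdd : Bornology.IsBounded (P ∪ Q)) {z : E} (hz : z ∈ P ∩ Q) {ε : ℝ} (hε : 0 < ε) :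
    ∀ᶠ t in atTop, penalizedObjective f (Λ t) (x t) (y t) ≤ f z + ε := by
  set D := Metric.diam (P ∪ Q)
  have hlower (t : ℕ) : -(‖g z‖ * D) ≤ penalizedObjective f (Λ t) (x t) (y t) - f z := by
    have hmid := hconv.sub_norm_mul_diam_le_apply_midpoint (hdiff z) hbdd
      (.inl (hs.left_mem t)) (.inr (hs.right_mem t)) (.inl hz.1)
    linarith [apply_midpoint_le_penalizedObjective (f := f) (hsched.penalty_nonneg t) (x t) (y t)]
  have herror : Tendsto (fun t ↦ (γ t * L + γ t * Λ t) * D ^ 2 / 2 +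
      (Λ (t + 1) - Λ t) / γ t * D ^ 2 / 8) atTop (𝓝 0) := by
    simpa using ((((hsched.tendsto_step.mul_const L).add hsched.tendsto_step_mul_penalty).mul_const
      (D ^ 2)).div_const 2).add
      ((hsched.tendsto_penalty_increment_div_step.mul_const (D ^ 2)).div_const 8)
  filter_upwards [eventually_le_of_le_one_sub_mul_add_mul hlower
    (hs.penalizedObjective_succ_le hsched hL hconv hdiff hsmooth hbdd hz)
    (fun t ↦ (hsched.step_pos t).le) (hsched.tendsto_step.eventually_le_const one_pos)
    hsched.tendsto_sum_step herror hε] with t ht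
  linarith

theorem tendsto_norm_sub (hs : IsSplitCondGradSeq g P Q Λ γ x y v w)
    (hsched : IsPenaltySchedule Λ γ) (hL : 0 ≤ L) (hconv : ConvexOn ℝ Set.univ f)
    (hdiff : ∀ p, HasGradientAt f (g p) p)
    (hsmooth : ∀ p q, f q - f p ≤ ⟪g p, q - p⟫ + L / 2 * ‖q - p‖ ^ 2)
    (hbdd : Bornology.IsBounded (P ∪ Q)) (hPQ : (P ∩ Q).Nonempty) :
    Tendsto (fun t ↦ ‖x t - y t‖) atTop (𝓝 0) := by
  obtain ⟨z, hz⟩ := hPQ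
  set K := 8 * (1 + ‖g z‖ * Metric.diam (P ∪ Q))
  have hbound : Tendsto (fun t ↦ √(K / Λ t)) atTop (𝓝 0) := by
    simpa using (tendsto_const_nhds.div_atTop hsched.tendsto_penalty).sqrt
  refine squeeze_zero' (.of_forall fun t ↦ norm_nonneg _) ?_ hbound
  filter_upwards [hs.eventually_penalizedObjective_le hsched hL hconv hdiff hsmooth hbdd hz
    one_pos, hsched.tendsto_penalty.eventually_gt_atTop 0] with t ht hΛ
  have hmid := hconv.sub_norm_mul_diam_le_apply_midpoint (hdiff z) hbdd (.inl (hs.left_mem t))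
    (.inr (hs.right_mem t)) (.inl hz.1)
  unfold penalizedObjective at ht
  refine Real.le_sqrt_of_sq_le ((le_div_iff₀ hΛ).2 ?_)
  linarith

theorem fst_eq_snd_and_optimal_of_mapClusterPt (hs : IsSplitCondGradSeq g P Q Λ γ x y v w)
    (hsched : IsPenaltySchedule Λ γ) (hL : 0 ≤ L) (hconv : ConvexOn ℝ Set.univ f)
    (hdiff : ∀ p, HasGradientAt f (g p) p)
    (hsmooth : ∀ p q, f q - f p ≤ ⟪g p, q - p⟫ + L / 2 * ‖q - p‖ ^ 2)
    (hPc : IsClosed P) (hQc : IsClosed Q) (hbdd : Bornology.IsBounded (P ∪ Q))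
    (hPQ : (P ∩ Q).Nonempty) {p : E × E} (hp : MapClusterPt p atTop fun t ↦ (x t, y t)) :
    p.1 = p.2 ∧ p.1 ∈ P ∩ Q ∧ ∀ z ∈ P ∩ Q, f p.1 ≤ f z := by
  have hmem : p ∈ P ×ˢ Q := (hPc.prod hQc).mem_of_mapClusterPt hp
    (.of_forall fun t ↦ ⟨hs.left_mem t, hs.right_mem t⟩)
  have hdiag : p.1 = p.2 := by
    refine sub_eq_zero.1 (norm_le_zero_iff.1 (le_of_forall_pos_le_add fun ε hε ↦ ?_))
    rw [zero_add]
    exact (isClosed_le (by fun_prop) continuous_const).mem_of_mapClusterPt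
      (s := {q : E × E | ‖q.1 - q.2‖ ≤ ε}) hp
      ((hs.tendsto_norm_sub hsched hL hconv hdiff hsmooth hbdd hPQ).eventually_le_const hε)
  have hf : Continuous f := continuous_iff_continuousAt.2 fun q ↦ (hdiff q).continuousAt
  refine ⟨hdiag, ⟨hmem.1, hdiag ▸ hmem.2⟩,
    fun z hz ↦ le_of_forall_pos_le_add fun ε hε ↦ ?_⟩
  have hmid := (isClosed_le (hf.comp (by fun_prop)) continuous_const).mem_of_mapClusterPt
    (s := {q : E × E | f ((2:ℝ)⁻¹ • (q.1 + q.2)) ≤ f z + ε}) hp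
    ((hs.eventually_penalizedObjective_le hsched hL hconv hdiff hsmooth hbdd hz hε).mono
      fun t ht ↦ (apply_midpoint_le_penalizedObjective (hsched.penalty_nonneg t) _ _).trans ht)
  have hmidpoint : (2:ℝ)⁻¹ • (p.1 + p.2) = p.1 := by rw [← hdiag]; module
  simpa only [Set.mem_ofPred_eq, hmidpoint] using hmid

end IsSplitCondGradSeq

end SplitConditionalGradient

theorem split_conditional_gradient_accumulation_general
    (n : ℕ) (f : EuclideanSpace ℝ (Fin n) → ℝ)
    (g : EuclideanSpace ℝ (Fin n) → EuclideanSpace ℝ (Fin n))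
    (L : ℝ) (hL : 0 < L)
    (hconv : ConvexOn ℝ Set.univ f)
    (hdiff : ∀ p, HasGradientAt f (g p) p)
    (hsmooth : ∀ p q, f q - f p ≤ ⟪g p, q - p⟫ + L / 2 * ‖q - p‖ ^ 2)
    (P Q : Set (EuclideanSpace ℝ (Fin n)))
    (hPcomp : IsCompact P)
    (hQcomp : IsCompact Q)
    (hPQ : (P ∩ Q).Nonempty)
    (x y v w : ℕ → EuclideanSpace ℝ (Fin n))
    (hxP : ∀ t : ℕ, x t ∈ P) (hyQ : ∀ t : ℕ, y t ∈ Q)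
    (hv : ∀ t : ℕ, v t ∈ P ∧ ∀ u ∈ P,
      ⟪g ((2:ℝ)⁻¹ • (x t + y t)) +
        Real.log ((t : ℝ) + 2) • (x t - (2:ℝ)⁻¹ • (x t + y t)), v t⟫ ≤
      ⟪g ((2:ℝ)⁻¹ • (x t + y t)) +
        Real.log ((t : ℝ) + 2) • (x t - (2:ℝ)⁻¹ • (x t + y t)), u⟫)
    (hw : ∀ t : ℕ, w t ∈ Q ∧ ∀ u ∈ Q,
      ⟪g ((2:ℝ)⁻¹ • (x t + y t)) +
        Real.log ((t : ℝ) + 2) • (y t - (2:ℝ)⁻¹ • (x t + y t)), w t⟫ ≤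
      ⟪g ((2:ℝ)⁻¹ • (x t + y t)) +
        Real.log ((t : ℝ) + 2) • (y t - (2:ℝ)⁻¹ • (x t + y t)), u⟫)
    (hxup : ∀ t : ℕ,
      x (t + 1) = x t + (2 / (Real.sqrt ((t : ℝ) + 2) * Real.log ((t : ℝ) + 2))) • (v t - x t))
    (hyup : ∀ t : ℕ,
      y (t + 1) = y t + (2 / (Real.sqrt ((t : ℝ) + 2) * Real.log ((t : ℝ) + 2))) • (w t - y t)) :
    Filter.Tendsto (fun t : ℕ => ‖x t - y t‖) Filter.atTop (nhds 0) ∧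
    ∀ p : EuclideanSpace ℝ (Fin n) × EuclideanSpace ℝ (Fin n),
      MapClusterPt p Filter.atTop (fun t : ℕ => (x t, y t)) →
        p.1 = p.2 ∧ p.1 ∈ P ∩ Q ∧ ∀ z ∈ P ∩ Q, f p.1 ≤ f z := by
  have hs : IsSplitCondGradSeq g P Q (fun t : ℕ ↦ Real.log ((t : ℝ) + 2))
      (fun t : ℕ ↦ 2 / (√((t : ℝ) + 2) * Real.log ((t : ℝ) + 2))) x y v w :=
    ⟨hxP, hyQ, hv, hw, hxup, hyup⟩
  have hbdd := hPcomp.isBounded.union hQcomp.isBounded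
  refine ⟨hs.tendsto_norm_sub isPenaltySchedule_log hL.le hconv hdiff hsmooth hbdd hPQ,
    fun p hp ↦ ?_⟩
  exact hs.fst_eq_snd_and_optimal_of_mapClusterPt isPenaltySchedule_log hL.le hconv hdiff
    hsmooth hPcomp.isClosed hQcomp.isClosed hbdd hPQ hp

/-- Feasibility and optimality of accumulation points of the Split Conditional Gradient
iterates with penalty `λ_t = ln(t+2)` and step size `γ_t = 2/(√(t+2)·ln(t+2))`:
`‖x_t - y_t‖ → 0` and every accumulation point `(x̃, ỹ)` of `((x_t, y_t))` satisfies
`x̃ = ỹ ∈ P ∩ Q` with `f x̃ = min_{z ∈ P ∩ Q} f z`. -/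
theorem split_conditional_gradient_accumulation
    (n : ℕ) (f : EuclideanSpace ℝ (Fin n) → ℝ)
    (g : EuclideanSpace ℝ (Fin n) → EuclideanSpace ℝ (Fin n))
    (L : ℝ) (hL : 0 < L)
    (hconv : ConvexOn ℝ Set.univ f)
    (hdiff : ∀ p, HasGradientAt f (g p) p)
    (hsmooth : ∀ p q, f q - f p ≤ ⟪g p, q - p⟫ + L / 2 * ‖q - p‖ ^ 2)
    (P Q : Set (EuclideanSpace ℝ (Fin n)))
    (hPne : P.Nonempty) (hPcomp : IsCompact P) (hPconv : Convex ℝ P)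
    (hQne : Q.Nonempty) (hQcomp : IsCompact Q) (hQconv : Convex ℝ Q)
    (hPQ : (P ∩ Q).Nonempty)
    (x y v w : ℕ → EuclideanSpace ℝ (Fin n))
    (hxP : ∀ t : ℕ, x t ∈ P) (hyQ : ∀ t : ℕ, y t ∈ Q)
    (hv : ∀ t : ℕ, v t ∈ P ∧ ∀ u ∈ P,
      ⟪g ((2:ℝ)⁻¹ • (x t + y t)) +
        Real.log ((t : ℝ) + 2) • (x t - (2:ℝ)⁻¹ • (x t + y t)), v t⟫ ≤
      ⟪g ((2:ℝ)⁻¹ • (x t + y t)) +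
        Real.log ((t : ℝ) + 2) • (x t - (2:ℝ)⁻¹ • (x t + y t)), u⟫)
    (hw : ∀ t : ℕ, w t ∈ Q ∧ ∀ u ∈ Q,
      ⟪g ((2:ℝ)⁻¹ • (x t + y t)) +
        Real.log ((t : ℝ) + 2) • (y t - (2:ℝ)⁻¹ • (x t + y t)), w t⟫ ≤
      ⟪g ((2:ℝ)⁻¹ • (x t + y t)) +
        Real.log ((t : ℝ) + 2) • (y t - (2:ℝ)⁻¹ • (x t + y t)), u⟫)
    (hxup : ∀ t : ℕ,
      x (t + 1) = x t + (2 / (Real.sqrt ((t : ℝ) + 2) * Real.log ((t : ℝ) + 2))) • (v t - x t))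
    (hyup : ∀ t : ℕ,
      y (t + 1) = y t + (2 / (Real.sqrt ((t : ℝ) + 2) * Real.log ((t : ℝ) + 2))) • (w t - y t)) :
    Filter.Tendsto (fun t : ℕ => ‖x t - y t‖) Filter.atTop (nhds 0) ∧
    ∀ p : EuclideanSpace ℝ (Fin n) × EuclideanSpace ℝ (Fin n),
      MapClusterPt p Filter.atTop (fun t : ℕ => (x t, y t)) →
        p.1 = p.2 ∧ p.1 ∈ P ∩ Q ∧ ∀ z ∈ P ∩ Q, f p.1 ≤ f z :=
  split_conditional_gradient_accumulation_general n f g L hL hconv hdiff hsmooth P Q hPcomp hQcomp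
    hPQ x y v w hxP hyQ hv hw hxup hyup
end

section
/- For every real t ≥ 0, √(t+2)·ln(t+2) − 1 ≤ √(t+1)·ln(t+1). -/
open Real

/- By the mean value theorem it suffices that `f x = √x * log x` has `f' ≤ 1` on `(0, ∞)`.
Since `f' x = (2 + log x) / (2 * √x)`, this is `log √x ≤ √x - 1`. -/

theorem Real.two_add_log_le_two_mul_sqrt {x : ℝ} (hx : 0 < x) : 2 + log x ≤ 2 * √x := by
  have h := log_le_sub_one_of_pos (sqrt_pos.2 hx)
  rw [log_sqrt hx.le] at h
  linarith

theorem Real.deriv_sqrt_mul_log_le_one (x : ℝ) : deriv (fun x => √x * log x) x ≤ 1 := by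
  rw [deriv_sqrt_mul_log]
  rcases le_or_gt x 0 with hx | hx
  · simp [sqrt_eq_zero_of_nonpos hx]
  · exact div_le_one_of_le₀ (two_add_log_le_two_mul_sqrt hx) (by positivity)

theorem Real.sqrt_mul_log_sub_le {x y : ℝ} (hx : 0 < x) (hxy : x ≤ y) :
    √y * log y - √x * log x ≤ y - x := by
  have hdiff : DifferentiableOn ℝ (fun x => √x * log x) (Set.Ioi 0) := fun z hz =>
    (hasDerivAt_sqrt_mul_log (ne_of_gt hz)).differentiableAt.differentiableWithinAt
  simpa using (convex_Ioi 0).image_sub_le_mul_sub_of_deriv_le hdiff.continuousOn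
    (by rwa [interior_Ioi]) (fun z _ => deriv_sqrt_mul_log_le_one z) x hx y (hx.trans_le hxy) hxy

/-- For every real `t ≥ 0`, `√(t+2)·ln(t+2) − 1 ≤ √(t+1)·ln(t+1)`. -/
theorem sqrt_log_succ_le (t : ℝ) (ht : 0 ≤ t) :
    Real.sqrt (t + 2) * Real.log (t + 2) - 1 ≤ Real.sqrt (t + 1) * Real.log (t + 1) := by
  have h := sqrt_mul_log_sub_le (by linarith : 0 < t + 1) (by linarith : t + 1 ≤ t + 2)
  linarith
end

section
/- For every real t ≥ 0, (√(t+2)·ln(t+2) − 1) · √(t+3)·ln(t+3) ≤ (t+2)·(ln(t+2))²; equivalently, (√(t+2)·ln(t+2) − 1) / ((t+2)·(ln(t+2))²) ≤ 1 / (√(t+3)·ln(t+3)). -/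
/-!
Write `g x = √x · log x`. Since `g' x = (log x + 2) / (2√x) ≤ 1` (this is `log √x ≤ √x - 1`),
`g (t+2) - 1 ≤ g (t+1)`. Moreover `g` is log-concave on `[1, ∞)`: by AM-GM and concavity of `log`,
`g a · g b ≤ g ((a+b)/2)²`. With `a = t+1`, `b = t+3` this gives
`(g (t+2) - 1) · g (t+3) ≤ g (t+1) · g (t+3) ≤ g (t+2)² = (t+2) · log (t+2)²`.
-/

open Real Set

lemma hasDerivAt_sqrt_mul_log_sub_self {x : ℝ} (hx : 0 < x) :
    HasDerivAt (fun y => √y * log y - y) ((log x + 2) / (2 * √x) - 1) x := by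
  have hsqrt : HasDerivAt (√·) (1 / (2 * √x)) x := hasDerivAt_sqrt hx.ne'
  refine ((hsqrt.mul (hasDerivAt_log hx.ne')).sub (hasDerivAt_id x)).congr_deriv ?_
  have hs : 0 < √x := sqrt_pos.mpr hx
  field_simp
  rw [sq_sqrt hx.le]
  ring

lemma log_add_two_le_two_mul_sqrt {x : ℝ} (hx : 0 < x) : log x + 2 ≤ 2 * √x := by
  have h := log_le_sub_one_of_pos (sqrt_pos.mpr hx)
  rw [log_sqrt hx.le] at h
  linarith

lemma antitoneOn_sqrt_mul_log_sub_self : AntitoneOn (fun x => √x * log x - x) (Ioi 0) := by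
  refine antitoneOn_of_hasDerivWithinAt_nonpos (convex_Ioi 0)
    (fun x hx => (hasDerivAt_sqrt_mul_log_sub_self hx).continuousAt.continuousWithinAt)
    (fun x hx => (hasDerivAt_sqrt_mul_log_sub_self (interior_Ioi.subset hx)).hasDerivWithinAt)
    fun x hx => ?_
  rw [interior_Ioi] at hx
  have hs : 0 < √x := sqrt_pos.mpr hx
  rw [sub_nonpos, div_le_one (by positivity)]
  exact log_add_two_le_two_mul_sqrt hx

lemma sqrt_mul_log_add_one_sub_one_le {x : ℝ} (hx : 0 < x) :
    √(x + 1) * log (x + 1) - 1 ≤ √x * log x := by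
  have h := antitoneOn_sqrt_mul_log_sub_self (mem_Ioi.mpr hx)
    (mem_Ioi.mpr (by linarith : 0 < x + 1)) (by linarith)
  simp only at h
  linarith

lemma sqrt_mul_sqrt_le_midpoint {a b : ℝ} (ha : 0 ≤ a) (hb : 0 ≤ b) : √a * √b ≤ (a + b) / 2 := by
  nlinarith [sq_nonneg (√a - √b), sq_sqrt ha, sq_sqrt hb]

lemma log_mul_log_le_sq_log_midpoint {a b : ℝ} (ha : 1 ≤ a) (hb : 1 ≤ b) :
    log a * log b ≤ log ((a + b) / 2) ^ 2 := by
  have hla := log_nonneg ha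
  have hlb := log_nonneg hb
  have hconc : log a + log b ≤ 2 * log ((a + b) / 2) := by
    rw [← log_mul (by positivity) (by positivity), two_mul, ← log_mul (by positivity) (by positivity)]
    exact log_le_log (by positivity) (by nlinarith [sq_nonneg (a - b)])
  nlinarith [sq_nonneg (log a - log b)]

lemma sqrt_mul_log_mul_le_sq_midpoint {a b : ℝ} (ha : 1 ≤ a) (hb : 1 ≤ b) :
    (√a * log a) * (√b * log b) ≤ (a + b) / 2 * log ((a + b) / 2) ^ 2 :=
  calc (√a * log a) * (√b * log b) = (√a * √b) * (log a * log b) := by ring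
    _ ≤ (a + b) / 2 * log ((a + b) / 2) ^ 2 :=
      mul_le_mul (sqrt_mul_sqrt_le_midpoint (by linarith) (by linarith))
        (log_mul_log_le_sq_log_midpoint ha hb)
        (mul_nonneg (log_nonneg ha) (log_nonneg hb)) (by linarith)

/-- For every real `t ≥ 0`,
`(√(t+2)·ln(t+2) − 1)·√(t+3)·ln(t+3) ≤ (t+2)·(ln(t+2))²`; equivalently,
`(√(t+2)·ln(t+2) − 1)/((t+2)·(ln(t+2))²) ≤ 1/(√(t+3)·ln(t+3))`. -/
theorem scg_induction_key_inequality (t : ℝ) (ht : 0 ≤ t) :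
    (Real.sqrt (t + 2) * Real.log (t + 2) - 1) * (Real.sqrt (t + 3) * Real.log (t + 3)) ≤
        (t + 2) * Real.log (t + 2) ^ 2 ∧
      (Real.sqrt (t + 2) * Real.log (t + 2) - 1) / ((t + 2) * Real.log (t + 2) ^ 2) ≤
        1 / (Real.sqrt (t + 3) * Real.log (t + 3)) := by
  have hg3 : 0 < √(t + 3) * log (t + 3) :=
    mul_pos (sqrt_pos.mpr (by linarith)) (log_pos (by linarith))
  have hstep : √(t + 2) * log (t + 2) - 1 ≤ √(t + 1) * log (t + 1) := by
    simpa only [add_assoc, one_add_one_eq_two] using sqrt_mul_log_add_one_sub_one_le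
      (by linarith : 0 < t + 1)
  have hconc := sqrt_mul_log_mul_le_sq_midpoint (by linarith : 1 ≤ t + 1) (by linarith : 1 ≤ t + 3)
  rw [show (t + 1 + (t + 3)) / 2 = t + 2 by ring] at hconc
  have key := (mul_le_mul_of_nonneg_right hstep hg3.le).trans hconc
  refine ⟨key, ?_⟩
  have hl2 : 0 < log (t + 2) := log_pos (by linarith)
  rw [div_le_div_iff₀ (by positivity) hg3]
  linarith
end

section
/- Let E be a real inner product space, let f : E → ℝ be convex, differentiable, and L-smooth on E (L > 0), let X ⊆ E be a compact convex set of diameter at most D > 0, and let f* = min_{y∈X} f(y). Let x ∈ X, let v ∈ X minimize y ↦ ⟨∇f(x), y⟩ over X, and suppose a, s ∈ X satisfy ⟨∇f(x), a − s⟩ ≥ ⟨∇f(x), x − v⟩ (the corrective-step condition). Then any point x' with f(x) − f(x') ≥ ⟨∇f(x), a − s⟩² / (2 L D²) satisfies f(x) − f(x') ≥ (f(x) − f*)² / (2 L D²). -/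
open RealInnerProductSpace

/-! The primal gap is bounded by the Frank-Wolfe gap: convexity gives
`f x - f* ≤ ⟪∇f x, x - x*⟫`, and minimality of the Frank-Wolfe vertex `v` gives
`⟪∇f x, x - x*⟫ ≤ ⟪∇f x, x - v⟫`, which the corrective-step condition bounds by
`⟪∇f x, a - s⟫`. Squaring this nonnegative bound turns the assumed progress into the claim. -/

theorem ConvexOn.le_of_hasFDerivAt {E : Type*} [NormedAddCommGroup E] [NormedSpace ℝ E]
    {s : Set E} {f : E → ℝ} {f' : E →L[ℝ] ℝ} {x y : E} (hf : ConvexOn ℝ s f)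
    (hx : x ∈ s) (hy : y ∈ s) (hf' : HasFDerivAt f f' x) : f x + f' (y - x) ≤ f y := by
  set φ : ℝ → ℝ := f ∘ AffineMap.lineMap x y
  have hφ : ConvexOn ℝ (Set.Icc 0 1) φ :=
    (hf.comp_affineMap _).subset (fun _ ht => hf.1.lineMap_mem hx hy ht) (convex_Icc 0 1)
  have hφ' : HasDerivAt φ (f' (y - x)) 0 :=
    hf'.comp_hasDerivAt_of_eq 0 AffineMap.hasDerivAt_lineMap (AffineMap.lineMap_apply_zero x y).symm
  have hslope := hφ.le_slope_of_hasDerivAt (Set.left_mem_Icc.2 zero_le_one)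
    (Set.right_mem_Icc.2 zero_le_one) one_pos hφ'
  simp only [slope_def_field, φ, Function.comp_apply, AffineMap.lineMap_apply_one,
    AffineMap.lineMap_apply_zero, sub_zero, div_one] at hslope
  linarith

theorem descent_step_primal_progress_general
    {E : Type*} [NormedAddCommGroup E] [InnerProductSpace ℝ E]
    (f : E → ℝ) (g : E → E) (L : ℝ) (hL : 0 < L)
    (hconv : ConvexOn ℝ Set.univ f)
    (hdiff : ∀ p : E, HasFDerivAt f ((innerSL ℝ) (g p)) p)
    (X : Set E)
    (D : ℝ)
    (xm : E) (hxm : xm ∈ X) (hmin : ∀ y ∈ X, f xm ≤ f y)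
    (x : E) (hx : x ∈ X)
    (v : E) (hvmin : ∀ y ∈ X, ⟪g x, v⟫ ≤ ⟪g x, y⟫)
    (a s : E)
    (hcond : ⟪g x, a - s⟫ ≥ ⟪g x, x - v⟫)
    (x' : E) (hx' : f x - f x' ≥ ⟪g x, a - s⟫ ^ 2 / (2 * L * D ^ 2)) :
    f x - f x' ≥ (f x - f xm) ^ 2 / (2 * L * D ^ 2) := by
  have primal_gap_le : f x - f xm ≤ ⟪g x, x - xm⟫ := by
    have := hconv.le_of_hasFDerivAt trivial trivial (hdiff x) (y := xm)
    rw [innerSL_apply_apply, inner_sub_right] at this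
    rw [inner_sub_right]
    linarith
  have fw_gap_le : ⟪g x, x - xm⟫ ≤ ⟪g x, x - v⟫ := by
    simp only [inner_sub_right]
    linarith [hvmin xm hxm]
  have primal_gap_nonneg : 0 ≤ f x - f xm := sub_nonneg.2 (hmin x hx)
  calc (f x - f xm) ^ 2 / (2 * L * D ^ 2)
      ≤ ⟪g x, a - s⟫ ^ 2 / (2 * L * D ^ 2) := by
        gcongr
        linarith
    _ ≤ f x - f x' := hx'

/-- Descent-step progress bound in the Corrective Frank-Wolfe convergence proof: under the
corrective-step condition `⟪∇f x, a - s⟫ ≥ ⟪∇f x, x - v⟫` with `v` a Frank-Wolfe vertex,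
any point `x'` achieving progress `⟪∇f x, a - s⟫²/(2LD²)` also achieves progress at least
`(f x - f*)²/(2LD²)`. -/
theorem descent_step_primal_progress
    {E : Type*} [NormedAddCommGroup E] [InnerProductSpace ℝ E]
    (f : E → ℝ) (g : E → E) (L : ℝ) (hL : 0 < L)
    (hconv : ConvexOn ℝ Set.univ f)
    (hdiff : ∀ p : E, HasFDerivAt f ((innerSL ℝ) (g p)) p)
    (X : Set E) (hXcomp : IsCompact X) (hXconv : Convex ℝ X)
    (D : ℝ) (hD : 0 < D) (hdiam : ∀ p ∈ X, ∀ q ∈ X, ‖p - q‖ ≤ D)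
    (hsmooth : ∀ p ∈ X, ∀ q ∈ X, f q - f p ≤ ⟪g p, q - p⟫ + L / 2 * ‖q - p‖ ^ 2)
    (xm : E) (hxm : xm ∈ X) (hmin : ∀ y ∈ X, f xm ≤ f y)
    (x : E) (hx : x ∈ X)
    (v : E) (hv : v ∈ X) (hvmin : ∀ y ∈ X, ⟪g x, v⟫ ≤ ⟪g x, y⟫)
    (a s : E) (ha : a ∈ X) (hs : s ∈ X)
    (hcond : ⟪g x, a - s⟫ ≥ ⟪g x, x - v⟫)
    (x' : E) (hx' : f x - f x' ≥ ⟪g x, a - s⟫ ^ 2 / (2 * L * D ^ 2)) :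
    f x - f x' ≥ (f x - f xm) ^ 2 / (2 * L * D ^ 2) :=
  descent_step_primal_progress_general f g L hL hconv hdiff X D xm hxm hmin x hx v hvmin a s hcond
    x' hx'
end
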